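/- arXiv:1105.3921 — 2 statements merged into one kernel-verified Lean document; each statement's English description precedes it below -/
import Mathlib

section
/- Let G be a simple graph with edge {a,b} such that a and b have no common neighbors. Then ELC(a,b) = LC(a)∘LC(b)∘LC(a) transforms G into the graph G' where: the edge {a,b} is kept; a is joined to exactly the former neighbors of b other than a, and b to exactly the former neighbors of a other than b; every pair (c,d) with c ∈ N(a)\{b} and d ∈ N(b)\{a} has its edge toggled; and all other adjacencies are unchanged. -/
/-- Local complementation of a simple graph at a vertex `a`: every edge between
two (distinct) neighbors of `a` is toggled; all other adjacencies (including
those of `a` itself) are unchanged. -/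
def lc {V : Type*} (G : SimpleGraph V) (a : V) : SimpleGraph V where
  Adj b c := b ≠ c ∧ Xor' (G.Adj b c) (G.Adj a b ∧ G.Adj a c)
  symm := by
    constructor
    intro b c h
    obtain ⟨hne, hx⟩ := h
    refine ⟨hne.symm, ?_⟩
    rw [G.adj_comm c b, and_comm]
    exact hx
  loopless := by
    constructor
    intro b h
    exact h.1 rfl

/-- Edge local complementation on the edge `{a,b}`. -/
def elc {V : Type*} (G : SimpleGraph V) (a b : V) : SimpleGraph V :=
  lc (lc (lc G a) b) a

/-!
Local complementation at `a` never changes `N(a)`, and when `a ∼ b` it replaces `N(b)` by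
`N(a) Δ N(b)` (away from `b`). Tracking the neighbourhoods of `a` and `b` through the three
steps shows that they are exchanged, while a pair `c, d` outside `{a, b}` is toggled once for
each step in which both are neighbours of the pivot; without common neighbours of `a` and `b`
the three toggles cancel except on the cross pairs of `N(a) × N(b)`.
-/

section LocalComplementation

variable {V : Type*} (G : SimpleGraph V) {a b c d : V}

theorem lc_adj : (lc G a).Adj c d ↔ c ≠ d ∧ Xor (G.Adj c d) (G.Adj a c ∧ G.Adj a d) :=
  Iff.rfl

@[simp]
theorem lc_adj_self_left : (lc G a).Adj a c ↔ G.Adj a c := by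
  simp only [lc_adj, G.loopless.irrefl a, false_and, xor_def, not_false_eq_true, and_true,
    or_false, and_iff_right_iff_imp]
  exact fun h ↦ h.ne

@[simp]
theorem lc_adj_self_right : (lc G a).Adj c a ↔ G.Adj c a := by
  rw [SimpleGraph.adj_comm, lc_adj_self_left, G.adj_comm]

theorem lc_adj_of_adj (hab : G.Adj a b) (hcb : c ≠ b) :
    (lc G a).Adj b c ↔ Xor (G.Adj b c) (G.Adj a c) := by
  simp [lc_adj, hab, hcb.symm]

end LocalComplementation

section EdgeLocalComplementation

variable {V : Type*} {G : SimpleGraph V} {a b c d : V}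

theorem lc_lc_adj_left (hab : G.Adj a b) (hca : c ≠ a) (hcb : c ≠ b) :
    (lc (lc G a) b).Adj a c ↔ G.Adj b c := by
  have hba : (lc G a).Adj b a := by simpa using hab.symm
  rw [lc_adj_of_adj _ hba hca, lc_adj_of_adj G hab hcb, lc_adj_self_left]
  grind

theorem elc_adj_left_right (hab : G.Adj a b) : (elc G a b).Adj a b := by
  simpa [elc] using hab

theorem elc_adj_left (hab : G.Adj a b) (hca : c ≠ a) (hcb : c ≠ b) :
    (elc G a b).Adj a c ↔ G.Adj b c := by
  rw [elc, lc_adj_self_left, lc_lc_adj_left hab hca hcb]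

theorem elc_adj_right (hab : G.Adj a b) (hca : c ≠ a) (hcb : c ≠ b) :
    (elc G a b).Adj b c ↔ G.Adj a c := by
  have hab₂ : (lc (lc G a) b).Adj a b := by simpa using hab
  rw [elc, lc_adj_of_adj _ hab₂ hcb, lc_lc_adj_left hab hca hcb, lc_adj_self_left,
    lc_adj_of_adj G hab hcb]
  grind

theorem elc_adj_of_ne (hab : G.Adj a b) (hdisj : ∀ x, ¬(G.Adj a x ∧ G.Adj b x))
    (hca : c ≠ a) (hcb : c ≠ b) (hda : d ≠ a) (hdb : d ≠ b) :
    (elc G a b).Adj c d ↔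
      c ≠ d ∧ Xor (G.Adj c d) (G.Adj a c ∧ G.Adj b d ∨ G.Adj a d ∧ G.Adj b c) := by
  rw [elc, lc_adj, lc_lc_adj_left hab hca hcb, lc_lc_adj_left hab hda hdb, lc_adj,
    lc_adj_of_adj G hab hcb, lc_adj_of_adj G hab hdb, lc_adj]
  grind

end EdgeLocalComplementation

/-- if `{a,b}` is an edge of `G` and `a`, `b` have no common
neighbor, then `ELC(a,b)` keeps the edge `{a,b}`, swaps the neighborhoods of
`a` and `b` (minus each other), toggles each cross pair
`(c,d) ∈ (N(a)\{b}) × (N(b)\{a})`, and leaves all other adjacencies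
unchanged. -/
theorem elc_description {V : Type*} (G : SimpleGraph V) (a b : V)
    (hab : G.Adj a b) (hdisj : ∀ c : V, ¬(G.Adj a c ∧ G.Adj b c)) :
    -- the edge {a,b} is kept
    (elc G a b).Adj a b ∧
    -- a is joined to exactly the former neighbors of b other than a
    (∀ c : V, c ≠ b → ((elc G a b).Adj a c ↔ G.Adj b c ∧ c ≠ a)) ∧
    -- b is joined to exactly the former neighbors of a other than b
    (∀ c : V, c ≠ a → ((elc G a b).Adj b c ↔ G.Adj a c ∧ c ≠ b)) ∧
    -- each cross pair has its edge toggled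
    (∀ c d : V, G.Adj a c → c ≠ b → G.Adj b d → d ≠ a →
      ((elc G a b).Adj c d ↔ ¬ G.Adj c d)) ∧
    -- all other adjacencies are unchanged
    (∀ c d : V, c ≠ a → c ≠ b → d ≠ a → d ≠ b →
      ¬(G.Adj a c ∧ G.Adj b d) → ¬(G.Adj a d ∧ G.Adj b c) →
      ((elc G a b).Adj c d ↔ G.Adj c d)) := by
  refine ⟨elc_adj_left_right hab, fun c hcb ↦ ?_, fun c hca ↦ ?_,
    fun c d hac hcb hbd hda ↦ ?_, fun c d hca hcb hda hdb hnac hnad ↦ ?_⟩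
  · rcases eq_or_ne c a with rfl | hca
    · simp
    · simp [elc_adj_left hab hca hcb, hca]
  · rcases eq_or_ne c b with rfl | hcb
    · simp
    · simp [elc_adj_right hab hca hcb, hcb]
  · have hca : c ≠ a := hac.ne'
    have hdb : d ≠ b := hbd.ne'
    have hcd : c ≠ d := by rintro rfl; exact hdisj c ⟨hac, hbd⟩
    rw [elc_adj_of_ne hab hdisj hca hcb hda hdb, iff_true_intro (Or.inl ⟨hac, hbd⟩),
      _root_.xor_comm, xor_true, and_iff_right hcd]
  · rw [elc_adj_of_ne hab hdisj hca hcb hda hdb, or_iff_right hnac, iff_false_intro hnad,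
      _root_.xor_comm, xor_false, id, and_iff_right_iff_imp]
    exact fun h ↦ h.ne
end

section
/- The logical CZ commutation identity holds: CZ^L_{AB} ∘ E^L_A ∘ E^L_B = E^L_A ∘ E^L_B ∘ CZ_{a₁,b₁} as operators on 10 qubits, where E^L_J = C^⬠_J · H_{j₁} · (∏_{i=2}^5 CZ_{j₁,j_i}) · H_{j₁} is the five-qubit-code encoding circuit on register J with core qubit j₁, C^⬠_J is the product of the five CZ gates along the pentagon cycle of register J, and CZ^L_{AB} is the logical controlled-phase gate, defined as the unitary acting as CZ on the code space spanned by |±^L⟩_A ⊗ |±^L⟩_B with |±^L⟩_J = C^⬠_J |±⟩^{⊗5}_J. Equivalently: applying a single physical CZ between the core qubits before encoding produces the logical two-qubit cluster state CZ^L_{AB}|+^L⟩_A|+^L⟩_B when applied to |+⟩^{⊗10}. -/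
open Matrix Sum

noncomputable section

/-- The controlled-phase gate acting on qubits `i` and `j` (identity on all
other qubits): it multiplies `|x⟩` by `(−1)^{x_i x_j}`. -/
def czGate {V : Type*} [Fintype V] [DecidableEq V] (i j : V) :
    Matrix (V → Fin 2) (V → Fin 2) ℂ :=
  Matrix.diagonal fun x => (-1 : ℂ) ^ ((x i).val * (x j).val)

/-- The state |+⟩^{⊗N}. -/
def plusAll (V : Type*) [Fintype V] : (V → Fin 2) → ℂ :=
  fun _ => ((1 / Real.sqrt 2 : ℝ) : ℂ) ^ (Fintype.card V)

/-- The Hadamard gate acting on qubit `a` (identity on the other qubits). -/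
def hGate {V : Type*} [Fintype V] [DecidableEq V] (a : V) :
    Matrix (V → Fin 2) (V → Fin 2) ℂ :=
  fun x y => if ∀ i, i ≠ a → x i = y i
    then ((1 / Real.sqrt 2 : ℝ) : ℂ) * (-1) ^ ((x a).val * (y a).val)
    else 0

/-- The ten qubits: register `A` is `Sum.inl`, register `B` is `Sum.inr`;
core qubits are `a₁ = inl 0`, `b₁ = inr 0`. -/
abbrev Q10 := Fin 5 ⊕ Fin 5

/-- The pentagon-cycle operator `C^⬠ = CZ₁₂CZ₂₃CZ₃₄CZ₄₅CZ₅₁` acting on the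
five qubits `j 0, …, j 4`, where `j` embeds a register into the ten qubits. -/
def pentagon (j : Fin 5 → Q10) : Matrix (Q10 → Fin 2) (Q10 → Fin 2) ℂ :=
  czGate (j 0) (j 1) * czGate (j 1) (j 2) * czGate (j 2) (j 3) *
    czGate (j 3) (j 4) * czGate (j 4) (j 0)

/-- The encoding circuit `E^L_J = C^⬠_J · H_{j₁} · (∏_{i=2}^5 CZ_{j₁,j_i}) · H_{j₁}`
of the five-qubit code on the register embedded by `j`, with core qubit `j 0`. -/
def encodeL (j : Fin 5 → Q10) : Matrix (Q10 → Fin 2) (Q10 → Fin 2) ℂ :=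
  pentagon j * hGate (j 0) *
    (czGate (j 0) (j 1) * czGate (j 0) (j 2) * czGate (j 0) (j 3) *
      czGate (j 0) (j 4)) * hGate (j 0)

/-- The pentagon-cycle operator on five qubits (used to define the logical
states of the five-qubit code). -/
def pentagon5 : Matrix (Fin 5 → Fin 2) (Fin 5 → Fin 2) ℂ :=
  czGate (0 : Fin 5) 1 * czGate (1 : Fin 5) 2 * czGate (2 : Fin 5) 3 *
    czGate (3 : Fin 5) 4 * czGate (4 : Fin 5) 0

/-- The logical state `|+^L⟩ = C^⬠ |+⟩^{⊗5}` of the five-qubit code. -/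
def plusL : (Fin 5 → Fin 2) → ℂ := pentagon5.mulVec (plusAll (Fin 5))

/-- The logical state `|−^L⟩ = C^⬠ |−⟩^{⊗5}` of the five-qubit code. -/
def minusL : (Fin 5 → Fin 2) → ℂ :=
  pentagon5.mulVec fun x => ∏ i : Fin 5, (((1 / Real.sqrt 2 : ℝ) : ℂ) * (-1) ^ (x i).val)

/-- Tensor product of a state on register A and a state on register B. -/
def tens (u v : (Fin 5 → Fin 2) → ℂ) : (Q10 → Fin 2) → ℂ :=
  fun x => u (fun i => x (inl i)) * v (fun i => x (inr i))


open Function in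
lemma czGate_mulVec {V : Type*} [Fintype V] [DecidableEq V] (i j : V)
    (v : (V → Fin 2) → ℂ) :
    (czGate i j).mulVec v = fun x => (-1 : ℂ) ^ ((x i).val * (x j).val) * v x := by
  funext x
  simp [czGate, Matrix.mulVec_diagonal]

open Function in
lemma hGate_mulVec {V : Type*} [Fintype V] [DecidableEq V] (a : V)
    (v : (V → Fin 2) → ℂ) :
    (hGate a).mulVec v = fun x => ((1 / Real.sqrt 2 : ℝ) : ℂ) *
      (v (update x a 0) + (-1 : ℂ) ^ ((x a).val) * v (update x a 1)) := by
  funext x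
  have hne : update x a (0 : Fin 2) ≠ update x a 1 := by
    intro h
    have := congrFun h a
    simp [update_self] at this
  have hsub : ({update x a 0, update x a 1} : Finset (V → Fin 2)) ⊆ Finset.univ :=
    Finset.subset_univ _
  have hzero : ∀ y ∈ (Finset.univ : Finset (V → Fin 2)),
      y ∉ ({update x a 0, update x a 1} : Finset (V → Fin 2)) →
      hGate a x y * v y = 0 := by
    intro y _ hy
    simp only [Finset.mem_insert, Finset.mem_singleton] at hy
    push_neg at hy
    have : ¬ ∀ i, i ≠ a → x i = y i := by
      intro h
      have hy' : y = update x a (y a) := by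
        funext i
        by_cases hi : i = a
        · subst hi; simp
        · simp [update_of_ne hi, h i hi]
      have : y a = 0 ∨ y a = 1 := by omega
      rcases this with h0 | h0 <;> rw [h0] at hy' <;> [exact hy.1 hy'; exact hy.2 hy']
    simp [hGate, this]
  have key : (hGate a).mulVec v x =
      ∑ y ∈ ({update x a 0, update x a 1} : Finset (V → Fin 2)), hGate a x y * v y := by
    rw [Matrix.mulVec, dotProduct]
    exact (Finset.sum_subset hsub hzero).symm
  rw [key, Finset.sum_pair hne]
  have hc0 : ∀ i, i ≠ a → x i = update x a (0:Fin 2) i :=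
    fun i hi => (update_of_ne hi _ x).symm
  have hc1 : ∀ i, i ≠ a → x i = update x a (1:Fin 2) i :=
    fun i hi => (update_of_ne hi _ x).symm
  have h0 : hGate a x (update x a 0) = ((1 / Real.sqrt 2 : ℝ) : ℂ) := by
    simp [hGate, if_pos hc0]
  have h1 : hGate a x (update x a 1) =
      ((1 / Real.sqrt 2 : ℝ) : ℂ) * (-1) ^ ((x a).val) := by
    simp [hGate, if_pos hc1]
  rw [h0, h1]
  ring

open Function in
lemma hczh {V : Type*} [Fintype V] [DecidableEq V] (a i1 i2 i3 i4 : V)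
    (n1 : i1 ≠ a) (n2 : i2 ≠ a) (n3 : i3 ≠ a) (n4 : i4 ≠ a)
    (v : (V → Fin 2) → ℂ) :
    (hGate a * (czGate a i1 * czGate a i2 * czGate a i3 * czGate a i4) *
      hGate a).mulVec v
      = fun x => v (update x a (x a + (x i1 + x i2 + x i3 + x i4))) := by
  funext x
  simp only [← Matrix.mulVec_mulVec, czGate_mulVec, hGate_mulVec]
  simp only [update_self, update_idem, update_of_ne n1, update_of_ne n2,
    update_of_ne n3, update_of_ne n4]
  set b0 := x a with hb0
  set b1 := x i1 with hb1
  set b2 := x i2 with hb2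
  set b3 := x i3 with hb3
  set b4 := x i4 with hb4
  have hc : ((1/Real.sqrt 2:ℝ):ℂ) * ((1/Real.sqrt 2:ℝ):ℂ) = 1/2 := by
    have h2 : Real.sqrt 2 * Real.sqrt 2 = 2 := Real.mul_self_sqrt (by norm_num)
    have : ((1/Real.sqrt 2 : ℝ) * (1/Real.sqrt 2 : ℝ)) = 1/2 := by
      rw [div_mul_div_comm, h2]; norm_num
    rw [← Complex.ofReal_mul, this]; norm_num
  clear_value b0 b1 b2 b3 b4
  clear hb0 hb1 hb2 hb3 hb4
  fin_cases b0 <;> fin_cases b1 <;> fin_cases b2 <;> fin_cases b3 <;> fin_cases b4 <;>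
    simp only [Fin.mk_zero, Fin.mk_one, Fin.isValue, Fin.reduceAdd, add_zero, zero_add, Fin.val_zero, Fin.val_one, pow_zero,
      pow_one, mul_one, one_mul, mul_zero, zero_mul, Nat.mul_zero, Nat.zero_mul,
      Nat.mul_one, Nat.one_mul] <;>
    (first
      | linear_combination 2*(v (update x a 0))*hc
      | linear_combination 2*(v (update x a 1))*hc
      | linear_combination (-2)*(v (update x a 0))*hc
      | linear_combination (-2)*(v (update x a 1))*hc)

open Function in
lemma hczh2 {V : Type*} [Fintype V] [DecidableEq V] (a i1 i2 i3 i4 : V)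
    (n1 : i1 ≠ a) (n2 : i2 ≠ a) (n3 : i3 ≠ a) (n4 : i4 ≠ a)
    (v : (V → Fin 2) → ℂ) :
    (hGate a).mulVec ((czGate a i1).mulVec ((czGate a i2).mulVec
      ((czGate a i3).mulVec ((czGate a i4).mulVec ((hGate a).mulVec v)))))
      = fun x => v (update x a (x a + (x i1 + x i2 + x i3 + x i4))) := by
  have h := hczh a i1 i2 i3 i4 n1 n2 n3 n4 v
  simp only [← Matrix.mulVec_mulVec] at h
  exact h

lemma val_add (p q : Fin 2) :
    (-1 : ℂ) ^ ((p + q).val) = (-1) ^ p.val * (-1) ^ q.val := by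
  fin_cases p <;> fin_cases q <;>
    simp only [Fin.mk_zero, Fin.mk_one, Fin.isValue, Fin.reduceAdd, Fin.val_zero,
      Fin.val_one, pow_zero, pow_one] <;> norm_num

lemma final_sign (p q : Fin 2) :
    (-1 : ℂ) ^ (p.val * q.val) =
      (1/2) * (1 + (-1) ^ q.val + (-1) ^ p.val - (-1) ^ p.val * (-1) ^ q.val) := by
  fin_cases p <;> fin_cases q <;> norm_num

/-- in the equivalent form given in the statement: applying a
single physical CZ between the core qubits before encoding produces the
logical two-qubit cluster state, i.e.
`E^L_A E^L_B CZ_{a₁,b₁} |+⟩^{⊗10} = CZ^L_{AB} |+^L⟩_A |+^L⟩_B`, where the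
logical CZ acts on the code space as
`CZ^L |+^L⟩|+^L⟩ = (|+^L⟩|+^L⟩ + |+^L⟩|−^L⟩ + |−^L⟩|+^L⟩ − |−^L⟩|−^L⟩)/2`
(expanding `CZ = (1/2)(I⊗I + I⊗Z + Z⊗I − Z⊗Z)` and using `Z^L|±^L⟩ = |∓^L⟩`). -/
theorem logical_cz_from_single_physical_cz :
    (encodeL inl * encodeL inr * czGate (inl 0 : Q10) (inr 0)).mulVec
        (plusAll Q10)
      = (1 / 2 : ℂ) •
          (tens plusL plusL + tens plusL minusL + tens minusL plusL
            - tens minusL minusL) := by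
  simp only [encodeL, pentagon, ← Matrix.mulVec_mulVec]
  rw [hczh2 (inl 0 : Q10) (inl 1) (inl 2) (inl 3) (inl 4)
    (by simp) (by simp) (by simp) (by simp)]
  rw [hczh2 (inr 0 : Q10) (inr 1) (inr 2) (inr 3) (inr 4)
    (by simp) (by simp) (by simp) (by simp)]
  simp only [czGate_mulVec]
  funext x
  simp only [tens, plusL, minusL, pentagon5, ← Matrix.mulVec_mulVec, czGate_mulVec,
    plusAll, Pi.smul_apply, Pi.add_apply, Pi.sub_apply, smul_eq_mul]
  simp only [Function.update_apply, Sum.inl.injEq, Sum.inr.injEq, reduceCtorEq,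
    reduceIte, Fin.isValue, Fin.reduceEq, if_true, if_false]
  simp only [Fintype.card_sum, Fintype.card_fin, Fin.prod_univ_five]
  rw [final_sign
    (x (Sum.inl 0) + (x (Sum.inl 1) + x (Sum.inl 2) + x (Sum.inl 3) + x (Sum.inl 4)))
    (x (Sum.inr 0) + (x (Sum.inr 1) + x (Sum.inr 2) + x (Sum.inr 3) + x (Sum.inr 4)))]
  simp only [val_add]
  ring
end
end
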